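/- Littlewood's supremum argument: let R := {φ ∈ (0, π) : there exists t > 0 with A φ t = 0 and A φ s ∈ (0, π) for all s ∈ [0, t)} be the set of initial angles from which the rod first falls on the right. Then φ₀ := sup R satisfies φ₀ ∈ (0, π) and A φ₀ t ∈ (0, π) for all t ≥ 0; that is, the rod released at rest from the angle sup R never becomes horizontal. -/

import Mathlib

/-!
Near `0` the rod at rest falls to the right, and near `π` it falls to the left (reflect through
`α ↦ π - α`, which replaces `u` by `-u`), so `φ₀ = sup R` lies strictly between them. If the rod
released from `φ₀` ever left `(0, π)`, then at its first exit time it would be at `0` (or `π`)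
moving outwards, with acceleration `-g` (or `+g`) pushing it strictly beyond. By Grönwall,
trajectories depend continuously on the initial angle, uniformly on compact time intervals, so
all nearby initial angles would exit the same way: through `0` this puts a whole neighbourhood
of `φ₀` into `R`, through `π` it keeps a whole neighbourhood out of `R`; both contradict
`φ₀ = sup R`.
-/

/-- `α` is a solution of the inverted-pendulum equation
`α'' t = -g * cos (α t) + u t * sin (α t)`. -/
def IsPendulumSolution (g : ℝ) (u : ℝ → ℝ) (α : ℝ → ℝ) : Prop :=
  ContDiff ℝ 2 α ∧
    ∀ t : ℝ, deriv (deriv α) t = -g * Real.cos (α t) + u t * Real.sin (α t)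

open Set Real Filter Topology
open scoped NNReal

theorem exists_first_mem_frontier {X : Type*} [TopologicalSpace X] {f : ℝ → X}
    (hf : Continuous f) {U : Set X} (hU : IsOpen U) {a b : ℝ} (hab : a ≤ b) (ha : f a ∈ U)
    (hb : f b ∉ U) : ∃ c ∈ Ioc a b, f c ∈ frontier U ∧ ∀ s ∈ Ico a c, f s ∈ U := by
  set S := Icc a b ∩ f ⁻¹' Uᶜ
  have hSb : BddBelow S := ⟨a, fun s hs => hs.1.1⟩
  have hcS : sInf S ∈ S :=
    (isClosed_Icc.inter (hU.isClosed_compl.preimage hf)).csInf_mem ⟨b, ⟨hab, le_rfl⟩, hb⟩ hSb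
  have hac : a < sInf S := hcS.1.1.lt_of_ne fun h => hcS.2 (h ▸ ha)
  have hin : ∀ s ∈ Ico a (sInf S), f s ∈ U := fun s hs => by
    by_contra hs'
    exact (csInf_le hSb ⟨⟨hs.1, hs.2.le.trans hcS.1.2⟩, hs'⟩).not_gt hs.2
  have hclosure : f (sInf S) ∈ closure U :=
    closure_mono (image_subset_iff.2 hin) <| hf.continuousWithinAt.mem_closure_image <| by
      rw [closure_Ico hac.ne]; exact right_mem_Icc.2 hac.le
  exact ⟨sInf S, ⟨hac, hcS.1.2⟩, hU.frontier_eq ▸ ⟨hclosure, hcS.2⟩, hin⟩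

theorem HasDerivAt.nonpos_of_eventually_le_nhdsLT {f : ℝ → ℝ} {f' t : ℝ} (hf : HasDerivAt f f' t)
    (h : ∀ᶠ s in 𝓝[<] t, f t ≤ f s) : f' ≤ 0 := by
  refine le_of_tendsto ((hasDerivAt_iff_tendsto_slope.1 hf).mono_left (nhdsLT_le_nhdsNE t)) ?_
  filter_upwards [h, self_mem_nhdsWithin] with s hs hst
  rw [slope_def_field]
  exact div_nonpos_of_nonneg_of_nonpos (sub_nonneg.2 hs) (sub_nonpos.2 (le_of_lt hst))

theorem eventually_nhdsGT_neg_of_deriv_deriv_neg {f : ℝ → ℝ} {t : ℝ} (hf : Differentiable ℝ f)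
    (hzero : f t = 0) (hderiv : deriv f t ≤ 0) (hderiv2 : deriv (deriv f) t < 0) :
    ∀ᶠ s in 𝓝[>] t, f s < 0 := by
  have hslope : Tendsto (slope (deriv f) t) (𝓝[>] t) (𝓝 (deriv (deriv f) t)) :=
    (hasDerivAt_iff_tendsto_slope.1
      (differentiableAt_of_deriv_ne_zero hderiv2.ne).hasDerivAt).mono_left (nhdsGT_le_nhdsNE t)
  have hneg : ∀ᶠ s in 𝓝[>] t, deriv f s < 0 := by
    filter_upwards [hslope.eventually (eventually_lt_nhds hderiv2), self_mem_nhdsWithin]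
      with s hs hts
    rw [slope_def_field, div_lt_iff₀ (sub_pos.2 hts), zero_mul] at hs
    linarith
  obtain ⟨b, hb, hsub⟩ := mem_nhdsGT_iff_exists_Ioo_subset.1 hneg
  have hanti : StrictAntiOn f (Ico t b) :=
    strictAntiOn_of_deriv_neg (convex_Ico t b) hf.continuous.continuousOn fun s hs =>
      hsub (by rwa [interior_Ico] at hs)
  filter_upwards [Ioo_mem_nhdsGT hb] with s hs
  exact hzero ▸ hanti ⟨le_rfl, hb⟩ ⟨le_of_lt hs.1, hs.2⟩ hs.1

def FallsRight (α : ℝ → ℝ) : Prop :=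
  ∃ t > (0 : ℝ), α t = 0 ∧ ∀ s ∈ Ico (0 : ℝ) t, α s ∈ Ioo (0 : ℝ) π

theorem fallsRight_of_lt_pi {α : ℝ → ℝ} (hα : Continuous α) {T : ℝ} (hT : 0 ≤ T)
    (hpos : 0 < α 0) (hneg : α T < 0) (hlt : ∀ s ∈ Icc 0 T, α s < π) : FallsRight α := by
  obtain ⟨c, hc, hfront, hin⟩ := exists_first_mem_frontier hα isOpen_Ioo hT
    ⟨hpos, hlt 0 ⟨le_rfl, hT⟩⟩ fun h => h.1.not_gt hneg
  rw [frontier_Ioo pi_pos, mem_insert_iff, mem_singleton_iff] at hfront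
  refine ⟨c, hc.1, hfront.resolve_right fun h => ?_, hin⟩
  exact (hlt c ⟨le_of_lt hc.1, hc.2⟩).ne h

theorem FallsRight.not_fallsRight_pi_sub {α : ℝ → ℝ} (h : FallsRight α) :
    ¬ FallsRight fun t => π - α t := by
  rintro ⟨t', ht', hpi, hin'⟩
  obtain ⟨t, ht, hzero, hin⟩ := h
  rcases lt_trichotomy t t' with hlt | rfl | hlt
  · have := hin' t ⟨le_of_lt ht, hlt⟩
    simp only [hzero, sub_zero, mem_Ioo, lt_self_iff_false, and_false] at this
  · linarith [pi_pos]
  · have := (hin t' ⟨le_of_lt ht', hlt⟩).2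
    linarith

def rightFallAngles (A : ℝ → ℝ → ℝ) : Set ℝ :=
  {φ | φ ∈ Ioo (0 : ℝ) π ∧ FallsRight (A φ)}

noncomputable def pendulumField (g : ℝ) (u : ℝ → ℝ) (t : ℝ) (p : ℝ × ℝ) : ℝ × ℝ :=
  (p.2, -g * cos p.1 + u t * sin p.1)

theorem lipschitzWith_pendulumField (g : ℝ) (u : ℝ → ℝ) {t : ℝ} {M : ℝ≥0} (hM : ‖u t‖₊ ≤ M) :
    LipschitzWith (1 + ‖g‖₊ + M) (pendulumField g u t) := by
  refine LipschitzWith.of_dist_le_mul fun p q => ?_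
  have h1 : dist p.1 q.1 ≤ dist p q := le_max_left _ _
  have h2 : dist p.2 q.2 ≤ dist p q := le_max_right _ _
  have hM' : |u t| ≤ M := hM
  have hcos := abs_cos_sub_cos_le p.1 q.1
  have hsin := abs_sin_sub_sin_le p.1 q.1
  simp only [pendulumField, Prod.dist_eq, Real.dist_eq, NNReal.coe_add, NNReal.coe_one,
    coe_nnnorm, Real.norm_eq_abs] at *
  have hmax : 0 ≤ (|g| + M) * max |p.1 - q.1| |p.2 - q.2| :=
    mul_nonneg (add_nonneg (abs_nonneg g) M.2) ((abs_nonneg _).trans h1)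
  refine max_le (by linarith) ?_
  calc |-g * cos p.1 + u t * sin p.1 - (-g * cos q.1 + u t * sin q.1)|
      = |-g * (cos p.1 - cos q.1) + u t * (sin p.1 - sin q.1)| := by ring_nf
    _ ≤ |g| * |cos p.1 - cos q.1| + |u t| * |sin p.1 - sin q.1| := by
      refine (abs_add_le _ _).trans ?_
      rw [abs_mul, abs_mul, abs_neg]
    _ ≤ |g| * |p.1 - q.1| + M * |p.1 - q.1| := by gcongr
    _ ≤ (1 + |g| + M) * max |p.1 - q.1| |p.2 - q.2| := by
      nlinarith [le_max_left |p.1 - q.1| |p.2 - q.2|, abs_nonneg g, M.2, abs_nonneg (p.1 - q.1)]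

noncomputable def phase (α : ℝ → ℝ) (t : ℝ) : ℝ × ℝ := (α t, deriv α t)

namespace IsPendulumSolution

variable {g : ℝ} {u α : ℝ → ℝ}

theorem differentiable (h : IsPendulumSolution g u α) : Differentiable ℝ α :=
  h.1.differentiable (by norm_num)

theorem differentiable_deriv (h : IsPendulumSolution g u α) : Differentiable ℝ (deriv α) :=
  (h.1.deriv' (n := 1)).differentiable (by norm_num)

theorem hasDerivAt_phase (h : IsPendulumSolution g u α) (t : ℝ) :
    HasDerivAt (phase α) (pendulumField g u t (phase α t)) t := by
  have hα := (h.differentiable t).hasDerivAt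
  have hα' := (h.differentiable_deriv t).hasDerivAt
  rw [h.2 t] at hα'
  exact hα.prodMk hα'

theorem pi_sub (h : IsPendulumSolution g u α) :
    IsPendulumSolution g (fun t => -u t) (fun t => π - α t) := by
  refine ⟨contDiff_const.sub h.1, fun t => ?_⟩
  have hderiv : deriv (fun t => π - α t) = fun t => -deriv α t := funext fun s => deriv_const_sub π
  rw [hderiv, deriv.fun_neg, h.2 t, cos_pi_sub, sin_pi_sub]
  ring

theorem eventually_nhdsGT_neg (hg : 0 < g) (h : IsPendulumSolution g u α) {t : ℝ}
    (hzero : α t = 0) (hderiv : deriv α t ≤ 0) : ∀ᶠ s in 𝓝[>] t, α s < 0 :=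
  eventually_nhdsGT_neg_of_deriv_deriv_neg h.differentiable hzero hderiv <| by
    rw [h.2 t, hzero, cos_zero, sin_zero]
    linarith

end IsPendulumSolution

theorem exists_dist_phase_le_mul_exp (g : ℝ) {u : ℝ → ℝ} (hu : Continuous u) (T : ℝ) :
    ∃ K : ℝ≥0, ∀ α β, IsPendulumSolution g u α → IsPendulumSolution g u β →
      ∀ t ∈ Icc 0 T, dist (phase α t) (phase β t) ≤ dist (phase α 0) (phase β 0) * exp (K * t) := by
  obtain ⟨M, hM⟩ := isCompact_Icc.bddAbove_image (f := fun t => ‖u t‖₊) (K := Icc 0 T)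
    hu.nnnorm.continuousOn
  refine ⟨1 + ‖g‖₊ + M, fun α β hα hβ t ht => ?_⟩
  have hsol := dist_le_of_trajectories_ODE_of_mem (v := pendulumField g u) (s := fun _ => univ)
    (fun t ht => (lipschitzWith_pendulumField g u
      (hM (mem_image_of_mem _ (Ico_subset_Icc_self ht)))).lipschitzOnWith)
    (continuous_iff_continuousAt.2 fun t => (hα.hasDerivAt_phase t).continuousAt).continuousOn
    (fun t _ => (hα.hasDerivAt_phase t).hasDerivWithinAt) (fun _ _ => trivial)
    (continuous_iff_continuousAt.2 fun t => (hβ.hasDerivAt_phase t).continuousAt).continuousOn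
    (fun t _ => (hβ.hasDerivAt_phase t).hasDerivWithinAt) (fun _ _ => trivial) le_rfl t ht
  rwa [sub_zero] at hsol

def IsRestFamily (g : ℝ) (u : ℝ → ℝ) (A : ℝ → ℝ → ℝ) : Prop :=
  ∀ φ : ℝ, IsPendulumSolution g u (A φ) ∧ A φ 0 = φ ∧ deriv (A φ) 0 = 0

namespace IsRestFamily

variable {g : ℝ} {u : ℝ → ℝ} {A : ℝ → ℝ → ℝ}

theorem pi_sub (hA : IsRestFamily g u A) :
    IsRestFamily g (fun t => -u t) (fun φ t => π - A (π - φ) t) := fun φ => by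
  obtain ⟨hsol, hinit, hrest⟩ := hA (π - φ)
  refine ⟨hsol.pi_sub, show π - A (π - φ) 0 = φ by rw [hinit, sub_sub_cancel], ?_⟩
  rw [deriv_const_sub, hrest, neg_zero]

theorem tendstoUniformlyOn (hA : IsRestFamily g u A) (hu : Continuous u) (φ T : ℝ) :
    TendstoUniformlyOn A (A φ) (𝓝 φ) (Icc 0 T) := by
  obtain ⟨K, hK⟩ := exists_dist_phase_le_mul_exp g hu T
  rw [Metric.tendstoUniformlyOn_iff]
  intro ε hε
  have hC : 0 < exp (K * T) := exp_pos _
  filter_upwards [Metric.ball_mem_nhds φ (div_pos hε hC)] with ψ hψ t ht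
  rw [Metric.mem_ball, dist_comm, lt_div_iff₀ hC] at hψ
  have hinit : dist (phase (A φ) 0) (phase (A ψ) 0) = dist φ ψ := by
    simp [phase, Prod.dist_eq, (hA φ).2.1, (hA φ).2.2, (hA ψ).2.1, (hA ψ).2.2]
  calc dist (A φ t) (A ψ t) ≤ dist (phase (A φ) t) (phase (A ψ) t) := le_max_left _ _
    _ ≤ dist φ ψ * exp (K * t) := hinit ▸ hK _ _ (hA φ).1 (hA ψ).1 t ht
    _ ≤ dist φ ψ * exp (K * T) := by gcongr; exact ht.2
    _ < ε := hψ

variable (hg : 0 < g) (hu : Continuous u) (hA : IsRestFamily g u A)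
include hg hu hA

theorem eventually_fallsRight {φ t₁ : ℝ} (ht₁ : 0 ≤ t₁) (hzero : A φ t₁ = 0)
    (hderiv : deriv (A φ) t₁ ≤ 0) (hlt : ∀ s ∈ Ico 0 t₁, A φ s < π) :
    ∀ᶠ ψ in 𝓝 φ, 0 < ψ → FallsRight (A ψ) := by
  have hsol := (hA φ).1
  obtain ⟨T, hT, hneg⟩ :=
    mem_nhdsGT_iff_exists_Ioc_subset.1 (hsol.eventually_nhdsGT_neg hg hzero hderiv)
  have hltT : ∀ s ∈ Icc 0 T, A φ s < π := by
    intro s hs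
    rcases lt_trichotomy s t₁ with h | rfl | h
    · exact hlt s ⟨hs.1, h⟩
    · exact hzero ▸ pi_pos
    · exact (hneg ⟨h, hs.2⟩ : A φ s < 0).trans pi_pos
  have hT0 : (0 : ℝ) ≤ T := ht₁.trans (le_of_lt hT)
  obtain ⟨m, hm, hmax⟩ := isCompact_Icc.exists_isMaxOn (nonempty_Icc.2 hT0)
    hsol.differentiable.continuous.continuousOn
  have hunif := hA.tendstoUniformlyOn hu φ T
  filter_upwards [hunif.eventually_forall_lt (hltT m hm) hmax,
    (hunif.tendsto_at (right_mem_Icc.2 hT0)).eventually_lt_const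
      (hneg (right_mem_Ioc.2 hT) : A φ T < 0)] with ψ hψπ hψT hψ
  exact fallsRight_of_lt_pi (hA ψ).1.differentiable.continuous hT0 (by rwa [(hA ψ).2.1]) hψT hψπ

theorem eventually_fallsRight_pi_sub {φ t₁ : ℝ} (ht₁ : 0 ≤ t₁) (hpi : A φ t₁ = π)
    (hderiv : 0 ≤ deriv (A φ) t₁) (hpos : ∀ s ∈ Ico 0 t₁, 0 < A φ s) :
    ∀ᶠ ψ in 𝓝 φ, ψ < π → FallsRight fun t => π - A ψ t := by
  have key := hA.pi_sub.eventually_fallsRight hg hu.neg (φ := π - φ) ht₁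
    (by simp [hpi]) (by simp [deriv_const_sub, hderiv]) (by simpa using hpos)
  have hcont : Tendsto (fun ψ => π - ψ) (𝓝 φ) (𝓝 (π - φ)) := tendsto_const_nhds.sub tendsto_id
  filter_upwards [hcont.eventually key] with ψ hψ hψπ
  simpa using hψ (sub_pos.2 hψπ)

theorem rightFallAngles_nonempty : (rightFallAngles A).Nonempty := by
  have hzero := hA.eventually_fallsRight hg hu le_rfl (hA 0).2.1 (hA 0).2.2.le (by simp)
  obtain ⟨ψ, hψ, hψ'⟩ :=
    ((hzero.filter_mono (nhdsWithin_le_nhds (s := Ioi 0))).and (Ioo_mem_nhdsGT pi_pos)).exists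
  exact ⟨ψ, hψ', hψ hψ'.1⟩

theorem exists_upperBound_lt_pi : ∃ b < π, b ∈ upperBounds (rightFallAngles A) := by
  have hpi := hA.eventually_fallsRight_pi_sub hg hu le_rfl (hA π).2.1 (hA π).2.2.ge (by simp)
  obtain ⟨b, hb, hsub⟩ := mem_nhdsLT_iff_exists_Ioo_subset.1
    (hpi.filter_mono (nhdsWithin_le_nhds (s := Iio π)))
  refine ⟨b, hb, fun φ hφ => not_lt.1 fun hbφ => ?_⟩
  exact hφ.2.not_fallsRight_pi_sub (hsub ⟨hbφ, hφ.1.2⟩ hφ.1.2)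

theorem bddAbove_rightFallAngles : BddAbove (rightFallAngles A) :=
  let ⟨b, _, hb⟩ := hA.exists_upperBound_lt_pi hg hu
  ⟨b, hb⟩

theorem sSup_rightFallAngles_mem_Ioo : sSup (rightFallAngles A) ∈ Ioo 0 π := by
  obtain ⟨φ, hφ⟩ := hA.rightFallAngles_nonempty hg hu
  obtain ⟨b, hbπ, hb⟩ := hA.exists_upperBound_lt_pi hg hu
  exact ⟨hφ.1.1.trans_le (le_csSup ⟨b, hb⟩ hφ), (csSup_le ⟨φ, hφ⟩ hb).trans_lt hbπ⟩

theorem apply_sSup_rightFallAngles_mem_Ioo {t : ℝ} (ht : 0 ≤ t) :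
    A (sSup (rightFallAngles A)) t ∈ Ioo 0 π := by
  have hbdd := hA.bddAbove_rightFallAngles hg hu
  have hmem := hA.sSup_rightFallAngles_mem_Ioo hg hu
  set φ₀ := sSup (rightFallAngles A)
  have hsol := (hA φ₀).1
  by_contra hout
  obtain ⟨t₁, ht₁, hfront, hin⟩ := exists_first_mem_frontier hsol.differentiable.continuous
    isOpen_Ioo ht (by rwa [(hA φ₀).2.1]) hout
  have hleft : ∀ᶠ s in 𝓝[<] t₁, s ∈ Ico 0 t₁ :=
    mem_of_superset (Ioo_mem_nhdsLT ht₁.1) Ioo_subset_Ico_self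
  have hderiv := (hsol.differentiable t₁).hasDerivAt
  rw [frontier_Ioo pi_pos, mem_insert_iff, mem_singleton_iff] at hfront
  rcases hfront with hzero | hpi
  · have hnear := hA.eventually_fallsRight hg hu ht₁.1.le hzero
      (hderiv.nonpos_of_eventually_le_nhdsLT (hleft.mono fun s hs => hzero ▸ (hin s hs).1.le))
      fun s hs => (hin s hs).2
    obtain ⟨ψ, hψ, hφ₀ψ, hψπ⟩ :=
      ((hnear.filter_mono nhdsWithin_le_nhds).and (Ioo_mem_nhdsGT hmem.2)).exists
    have hψ₀ : 0 < ψ := hmem.1.trans hφ₀ψ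
    exact (le_csSup hbdd ⟨⟨hψ₀, hψπ⟩, hψ hψ₀⟩).not_gt hφ₀ψ
  · have hnear := hA.eventually_fallsRight_pi_sub hg hu ht₁.1.le hpi
      (neg_nonpos.1 <| hderiv.neg.nonpos_of_eventually_le_nhdsLT
        (hleft.mono fun s hs => neg_le_neg (hpi ▸ (hin s hs).2.le)))
      fun s hs => (hin s hs).1
    obtain ⟨ψ, hψ, hψR⟩ := (hnear.and_frequently (mem_closure_iff_frequently.1
      (csSup_mem_closure (hA.rightFallAngles_nonempty hg hu) hbdd))).exists
    exact hψR.2.not_fallsRight_pi_sub (hψ hψR.1.2)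

end IsRestFamily

/-- Littlewood's supremum argument: the rod released at rest from the angle
`sup R`, where `R` is the set of initial angles from which the rod first
falls to the right, never becomes horizontal. -/
theorem pendulum_littlewood_sup (g : ℝ) (hg : 0 < g)
    (u : ℝ → ℝ) (hu : Continuous u) (A : ℝ → ℝ → ℝ)
    (hA : ∀ φ : ℝ, IsPendulumSolution g u (A φ) ∧ A φ 0 = φ ∧ deriv (A φ) 0 = 0)
    (R : Set ℝ)
    (hR : R = {φ : ℝ | φ ∈ Set.Ioo (0 : ℝ) Real.pi ∧
      ∃ t > (0 : ℝ), A φ t = 0 ∧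
        ∀ s ∈ Set.Ico (0 : ℝ) t, A φ s ∈ Set.Ioo (0 : ℝ) Real.pi})
    (φ₀ : ℝ) (hφ₀ : φ₀ = sSup R) :
    φ₀ ∈ Set.Ioo (0 : ℝ) Real.pi ∧
      ∀ t : ℝ, 0 ≤ t → A φ₀ t ∈ Set.Ioo (0 : ℝ) Real.pi := by
  have hfam : IsRestFamily g u A := hA
  have hR' : R = rightFallAngles A := hR
  subst hφ₀ hR'
  exact ⟨hfam.sSup_rightFallAngles_mem_Ioo hg hu,
    fun t ht => hfam.apply_sSup_rightFallAngles_mem_Ioo hg hu ht⟩
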